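/- Let g be a connected finite simple graph, let φ be a set of pairwise parallel minimal separators of g, and let S ∈ φ be such that the vertices of S are pairwise adjacent in g (a clique). Then for every S' ∈ φ with S' ≠ S, there exists a connected component c of g − S such that S' ⊆ c ∪ N_g(c). -/

import Mathlib

open SimpleGraph

/-- A graph is chordal if every cycle of length greater than three has a chord,
i.e. an edge joining two vertices of the cycle that are non-adjacent on the cycle. -/
def IsChordal {V : Type} (h : SimpleGraph V) : Prop :=
  ∀ (v : V) (c : h.Walk v v), c.IsCycle → 3 < c.length →
    ∃ u w : V, u ∈ c.support ∧ w ∈ c.support ∧ h.Adj u w ∧ s(u, w) ∉ c.edges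

/-- The set of minimal triangulations of `g` (chordal supergraphs on the same vertex
set, minimal with respect to edge inclusion). -/
def MinTri {V : Type} (g : SimpleGraph V) : Set (SimpleGraph V) :=
  {h | g ≤ h ∧ IsChordal h ∧ ∀ h' : SimpleGraph V, g ≤ h' → h' < h → ¬ IsChordal h'}

/-- `S` is a `(u,v)`-separator of `g`: `u` and `v` lie in distinct connected
components of `g` with the vertices of `S` deleted. -/
def IsSep {V : Type} (g : SimpleGraph V) (u v : V) (S : Set V) : Prop :=
  ∃ (hu : u ∈ Sᶜ) (hv : v ∈ Sᶜ),
    ¬ (g.induce Sᶜ).Reachable ⟨u, hu⟩ ⟨v, hv⟩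

/-- `S` is a minimal `(u,v)`-separator of `g`. -/
def IsMinSepPair {V : Type} (g : SimpleGraph V) (u v : V) (S : Set V) : Prop :=
  IsSep g u v S ∧ ∀ S' : Set V, S' ⊂ S → ¬ IsSep g u v S'

/-- The set of minimal separators of `g`. -/
def MinSep {V : Type} (g : SimpleGraph V) : Set (Set V) :=
  {S | ∃ u v : V, IsMinSepPair g u v S}

/-- `S` crosses `T`. -/
def Crosses {V : Type} (g : SimpleGraph V) (S T : Set V) : Prop :=
  ∃ u ∈ T, ∃ v ∈ T, IsSep g u v S

/-- `φ` is a set of pairwise parallel (non-crossing) minimal separators of `g`. -/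
def PairwiseParallel {V : Type} (g : SimpleGraph V) (φ : Set (Set V)) : Prop :=
  φ ⊆ MinSep g ∧ φ.Pairwise fun S T => ¬ Crosses g S T

/-- `φ` is a maximal set of pairwise parallel minimal separators of `g`. -/
def MaxPairwiseParallel {V : Type} (g : SimpleGraph V) (φ : Set (Set V)) : Prop :=
  PairwiseParallel g φ ∧ ∀ ψ : Set (Set V), PairwiseParallel g ψ → φ ⊆ ψ → φ = ψ

/-- `g_[φ]`: the graph obtained from `g` by saturating every member of `φ`. -/
def satSet {V : Type} (g : SimpleGraph V) (φ : Set (Set V)) : SimpleGraph V where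
  Adj u v := g.Adj u v ∨ (u ≠ v ∧ ∃ S ∈ φ, u ∈ S ∧ v ∈ S)
  symm := by
    constructor
    intro u v h
    rcases h with h | ⟨hne, S, hS, hu, hv⟩
    · exact Or.inl h.symm
    · exact Or.inr ⟨hne.symm, S, hS, hv, hu⟩
  loopless := by
    constructor
    intro u h
    rcases h with h | ⟨hne, _⟩
    · exact g.loopless.irrefl u h
    · exact hne rfl

/-- The neighborhood of a set `U` of vertices: vertices outside `U` adjacent to `U`. -/
def nbhd {V : Type} (g : SimpleGraph V) (U : Set V) : Set V :=
  {v | v ∉ U ∧ ∃ u ∈ U, g.Adj u v}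

/-- `c` is (the vertex set of) a connected component of `g − S`. -/
def IsCompOf {V : Type} (g : SimpleGraph V) (S : Set V) (c : Set V) : Prop :=
  c ⊆ Sᶜ ∧ (g.induce c).Connected ∧
  ∀ u ∈ c, ∀ v : V, v ∉ S → g.Adj u v → v ∈ c

/-!
Let `T` be a minimal `(u,v)`-separator. The clique `S` minus `T` is connected in `g − T`, so it
meets at most one of the components `C_u`, `C_v` of `u`, `v` in `g − T`; say `C_u` avoids `S`.
Then `C_u` is a connected subgraph of `g − S` and lies in a single component `c` of `g − S`.
Since `C_u` is a full component of `T` (every vertex of `T` has a neighbour in it, by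
minimality of `T`), every vertex of `T` lies in `c` or is adjacent to `c`.
-/

section

variable {V : Type} {g : SimpleGraph V} {S T C D : Set V} {u v : V}

lemma reachable_induce_of_connected (hDS : D ⊆ Sᶜ) (hD : (g.induce D).Connected)
    (hu : u ∈ D) (hv : v ∈ D) : (g.induce Sᶜ).Reachable ⟨u, hDS hu⟩ ⟨v, hDS hv⟩ :=
  (hD.preconnected ⟨u, hu⟩ ⟨v, hv⟩).map (induceHomOfLE (G := g) hDS).toHom

lemma IsSep.symm (h : IsSep g u v S) : IsSep g v u S :=
  let ⟨hu, hv, hsep⟩ := h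
  ⟨hv, hu, fun hr => hsep hr.symm⟩

lemma IsMinSepPair.symm (h : IsMinSepPair g u v S) : IsMinSepPair g v u S :=
  ⟨h.1.symm, fun T hT hsep => h.2 T hT hsep.symm⟩

lemma IsSep.notMem_of_connected (h : IsSep g u v S) (hDS : D ⊆ Sᶜ)
    (hD : (g.induce D).Connected) (hu : u ∈ D) : v ∉ D := fun hv =>
  let ⟨_, _, hsep⟩ := h
  hsep (reachable_induce_of_connected hDS hD hu hv)

lemma IsCompOf.mem_of_reachable (hC : IsCompOf g S C) (hu : u ∈ Sᶜ) (hv : v ∈ Sᶜ)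
    (huv : (g.induce Sᶜ).Reachable ⟨u, hu⟩ ⟨v, hv⟩) (huC : u ∈ C) : v ∈ C := by
  by_contra hvC
  obtain ⟨p⟩ := huv
  obtain ⟨d, -, hd₁, hd₂⟩ := p.exists_boundary_dart {w | w.1 ∈ C} huC hvC
  exact hd₂ (hC.2.2 _ hd₁ _ d.snd.2 d.adj)

lemma IsCompOf.subset_of_connected (hC : IsCompOf g S C) (hDS : D ⊆ Sᶜ)
    (hD : (g.induce D).Connected) (hDC : (D ∩ C).Nonempty) : D ⊆ C := by
  obtain ⟨u, huD, huC⟩ := hDC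
  exact fun v hv =>
    hC.mem_of_reachable _ _ (reachable_induce_of_connected hDS hD huD hv) huC

lemma IsCompOf.isSep (hC : IsCompOf g S C) (huC : u ∈ C) (hv : v ∉ S) (hvC : v ∉ C) :
    IsSep g u v S :=
  ⟨hC.1 huC, hv, fun huv => hvC (hC.mem_of_reachable _ _ huv huC)⟩

lemma exists_isCompOf_mem (hu : u ∉ S) : ∃ C, IsCompOf g S C ∧ u ∈ C := by
  set 𝒟 := {D : Set V | D ⊆ Sᶜ ∧ (g.induce D).Connected ∧ u ∈ D}
  have hu𝒟 : {u} ∈ 𝒟 := ⟨Set.singleton_subset_iff.2 hu, .of_subsingleton, rfl⟩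
  refine ⟨⋃₀ 𝒟, ⟨Set.sUnion_subset fun D hD => hD.1, ?_, ?_⟩,
    Set.mem_sUnion_of_mem (Set.mem_singleton u) hu𝒟⟩
  · exact induce_sUnion_connected_of_pairwise_not_disjoint ⟨_, hu𝒟⟩
      (fun hD hD' => ⟨u, hD.2.2, hD'.2.2⟩) (fun hD => hD.2.1)
  · rintro w ⟨D, hD, hwD⟩ z hz hwz
    have hDz : D ∪ {z} ∈ 𝒟 :=
      ⟨Set.union_subset hD.1 (Set.singleton_subset_iff.2 hz),
        connected_induce_union hD.2.1.preconnected (Connected.of_subsingleton).preconnected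
          hwD rfl hwz, Or.inl hD.2.2⟩
    exact Set.mem_sUnion_of_mem (Or.inr rfl) hDz

lemma subset_union_nbhd (h : ∀ x ∈ T, ∃ a ∈ C, g.Adj a x) : T ⊆ C ∪ nbhd g C := by
  intro x hx
  by_cases hxC : x ∈ C
  · exact Or.inl hxC
  · exact Or.inr ⟨hxC, h x hx⟩

lemma IsCompOf.diff_singleton {x : V} (hC : IsCompOf g T C) (hx : ∀ a ∈ C, ¬ g.Adj a x) :
    IsCompOf g (T \ {x}) C := by
  refine ⟨fun a ha haT => hC.1 ha haT.1, hC.2.1, fun a ha z hz haz => ?_⟩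
  have hzx : z ≠ x := by rintro rfl; exact hx a ha haz
  exact hC.2.2 a ha z (fun hzT => hz ⟨hzT, hzx⟩) haz

lemma IsMinSepPair.exists_adj_of_mem {x : V} (hmin : IsMinSepPair g u v T)
    (hC : IsCompOf g T C) (huC : u ∈ C) (hx : x ∈ T) : ∃ a ∈ C, g.Adj a x := by
  by_contra! hnadj
  have hvC : v ∉ C := hmin.1.notMem_of_connected hC.1 hC.2.1 huC
  have hv : v ∉ T \ {x} := fun hvT => hmin.1.2.1 hvT.1
  exact hmin.2 (T \ {x}) (Set.sdiff_singleton_ssubset.2 hx)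
    ((hC.diff_singleton hnadj).isSep huC hv hvC)

lemma IsSep.disjoint_or_disjoint_of_isClique {Cu Cv : Set V} (hS : g.IsClique S)
    (hsep : IsSep g u v T) (hCu : IsCompOf g T Cu) (hu : u ∈ Cu)
    (hCv : IsCompOf g T Cv) (hv : v ∈ Cv) : Disjoint Cu S ∨ Disjoint Cv S := by
  by_contra! h
  obtain ⟨a, haCu, haS⟩ := Set.not_disjoint_iff.1 h.1
  obtain ⟨b, hbCv, hbS⟩ := Set.not_disjoint_iff.1 h.2
  have hbCu : b ∈ Cu := by
    rcases eq_or_ne a b with rfl | hab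
    · exact haCu
    · exact hCu.2.2 a haCu b (hCv.1 hbCv) (hS haS hbS hab)
  have hCvCu : Cv ⊆ Cu := hCu.subset_of_connected hCv.1 hCv.2.1 ⟨b, hbCv, hbCu⟩
  exact hsep.notMem_of_connected hCu.1 hCu.2.1 hu (hCvCu hv)

lemma IsMinSepPair.exists_isCompOf_subset_union_nbhd (hmin : IsMinSepPair g u v T)
    (hC : IsCompOf g T C) (huC : u ∈ C) (hCS : Disjoint C S) :
    ∃ c, IsCompOf g S c ∧ T ⊆ c ∪ nbhd g c := by
  obtain ⟨c, hc, huc⟩ := exists_isCompOf_mem (g := g) (hCS.subset_compl_right huC)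
  have hCc : C ⊆ c := hc.subset_of_connected hCS.subset_compl_right hC.2.1 ⟨u, huC, huc⟩
  refine ⟨c, hc, subset_union_nbhd fun x hx => ?_⟩
  obtain ⟨a, haC, hax⟩ := hmin.exists_adj_of_mem hC huC hx
  exact ⟨a, hCc haC, hax⟩

theorem exists_isCompOf_subset_union_nbhd_of_isClique (hS : g.IsClique S)
    (hT : T ∈ MinSep g) : ∃ c, IsCompOf g S c ∧ T ⊆ c ∪ nbhd g c := by
  obtain ⟨u, v, hmin⟩ := hT
  obtain ⟨hu, hv, -⟩ := hmin.1
  obtain ⟨Cu, hCu, huCu⟩ := exists_isCompOf_mem (g := g) hu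
  obtain ⟨Cv, hCv, hvCv⟩ := exists_isCompOf_mem (g := g) hv
  rcases hmin.1.disjoint_or_disjoint_of_isClique hS hCu huCu hCv hvCv with hCuS | hCvS
  · exact hmin.exists_isCompOf_subset_union_nbhd hCu huCu hCuS
  · exact hmin.symm.exists_isCompOf_subset_union_nbhd hCv hvCv hCvS

end

theorem parallel_sep_in_some_component_general {V : Type}
    (g : SimpleGraph V)
    (φ : Set (Set V)) (hφ : PairwiseParallel g φ)
    (S : Set V) (hclq : g.IsClique S) :
    ∀ S' ∈ φ, S' ≠ S → ∃ c : Set V, IsCompOf g S c ∧ S' ⊆ c ∪ nbhd g c :=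
  fun _ hS' _ => exists_isCompOf_subset_union_nbhd_of_isClique hclq (hφ.1 hS')

/-- If `S` is a clique member of a pairwise parallel set `φ` of minimal separators of
a connected graph `g`, then every other member of `φ` is contained in `c ∪ N_g(c)`
for some connected component `c` of `g − S`. -/
theorem parallel_sep_in_some_component {V : Type} [Fintype V]
    (g : SimpleGraph V) (hconn : g.Connected)
    (φ : Set (Set V)) (hφ : PairwiseParallel g φ)
    (S : Set V) (hSφ : S ∈ φ) (hclq : g.IsClique S) :
    ∀ S' ∈ φ, S' ≠ S → ∃ c : Set V, IsCompOf g S c ∧ S' ⊆ c ∪ nbhd g c :=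
  parallel_sep_in_some_component_general g φ hφ S hclq
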